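/- arXiv:1104.2205 — 4 statements merged into one kernel-verified Lean document; each statement's English description precedes it below -/
import Mathlib

section
/- Let p, q be coprime integers with 0 < p < q, let b be an integer with 0 ≤ b ≤ q − 1, let s ∈ {1, …, q}, and let h be the unique index with b_h ≤ b < b_{h+1} (with the convention b_{k̄+1} = q and p_{k̄} = 0). Then the least integer n ≥ 1 such that σ_b^n(s) = s (the period of the s-th root of the curve (w − 1)^(q−p) · w^p · ξ^q = 1 along a circle enclosing the first b branch points) equals: (i) P_{h−2} + (⌊(b − b_h − 1)/p_h⌋ + 1)·P_{h−1} if l_h(s) ≤ b − b_h + p_h and (b − b_h) mod~ p_h < l_h(s) mod~ p_h; (ii) P_{h−2} + (⌊(b − b_h − 1)/p_h⌋ + 2)·P_{h−1} if l_h(s) ≤ b − b_h + p_h and (b − b_h) mod~ p_h ≥ l_h(s) mod~ p_h; (iii) P_{h−1} if l_h(s) > b − b_h + p_h. Here ⌊·/·⌋ is floor division of integers (so ⌊(−1)/p_h⌋ = −1 when b = b_h). -/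
/-- The pair (q_k, p_k): q_0 = q, p_0 = q - p, q_{k+1} = p_k, p_{k+1} = q_k mod p_k
(with the convention n mod 0 = n, as in Lean's `Nat.mod`). -/
def qpSeq (q p : ℕ) : ℕ → ℕ × ℕ
  | 0 => (q, q - p)
  | k + 1 => ((qpSeq q p k).2, (qpSeq q p k).1 % (qpSeq q p k).2)

/-- The partial quotients a_k = ⌊q_k / p_k⌋. -/
def aSeq (q p k : ℕ) : ℕ := (qpSeq q p k).1 / (qpSeq q p k).2

/-- The branch-point-count thresholds: b_0 = 0, b_{k+1} = b_k + q_k - p_k. -/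
def bSeq (q p : ℕ) : ℕ → ℕ
  | 0 => 0
  | k + 1 => bSeq q p k + ((qpSeq q p k).1 - (qpSeq q p k).2)

/-- Numerators of the convergents of the continued fraction of q/(q-p), shifted
so that `Pseq q p n` is P_{n-2}: P_{-2} = 0, P_{-1} = 1, P_n = a_n P_{n-1} + P_{n-2}. -/
def Pseq (q p : ℕ) : ℕ → ℤ
  | 0 => 0
  | 1 => 1
  | n + 2 => (aSeq q p n : ℤ) * Pseq q p (n + 1) + Pseq q p n

/-- a mod~ b : equals a mod b if this is nonzero, and b otherwise. -/
def amod (a b : ℕ) : ℕ := if a % b = 0 then b else a % b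

/-- l_0(s) = s, l_h(s) = l_{h-1}(s) mod~ p_{h-1}. -/
def lSeq (q p s : ℕ) : ℕ → ℕ
  | 0 => s
  | h + 1 => amod (lSeq q p s h) (qpSeq q p h).2

/-- The transposition τ_j of {1,…,q} exchanging j and (j + q - p) mod~ q. -/
def tau (q p j : ℕ) : Equiv.Perm ℕ := Equiv.swap j (amod (j + q - p) q)

/-- The monodromy permutation σ_b = τ_b ∘ ⋯ ∘ τ_1 (τ_1 applied first, σ_0 = id). -/
def sigma (q p : ℕ) : ℕ → Equiv.Perm ℕ
  | 0 => 1
  | b + 1 => tau q p (b + 1) * sigma q p b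

/-!
Write `d = q - p`. The transpositions `τ_1, …, τ_b` are the edges of a graph on `{1, …, q}`.
The two points exchanged by `τ_{b+1}` always lie in different components of the graph of
`τ_1, …, τ_b`, so multiplying by `τ_{b+1}` merges two cycles: the cycles of `σ_b` are exactly the
components, and the period of `s` is the size of its component.

For `b < p` the edges are `j — j + d`, and the components are the residue classes mod `d` inside
`[1, b + d]`. For `b = p + c` every point is joined to its residue mod `d`, and on residues the
remaining edges `j — j - p` form the graph of the pair `(d, d - q mod d)` with threshold `c`: one
step of the continued fraction expansion of `q / d`. Counting a component and its part in
`[1, d]` fibrewise gives the recursion of the numerators and denominators of the convergents,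
and the formula follows by induction on `q`.
-/

open Finset Relation Function MulAction Equiv

section Amod

variable {a a' b t : ℕ}

theorem amod_pos (hb : 0 < b) : 0 < amod a b := by
  unfold amod; split <;> omega

theorem amod_le (hb : 0 < b) : amod a b ≤ b := by
  unfold amod; split
  · exact le_rfl
  · exact (Nat.mod_lt _ hb).le

theorem amod_congr (h : a % b = a' % b) : amod a b = amod a' b := by
  unfold amod; rw [h]

theorem amod_add_self : amod (a + b) b = amod a b :=
  amod_congr (Nat.add_mod_right a b)

theorem amod_of_le (ha : 0 < a) (hab : a ≤ b) : amod a b = a := by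
  rcases hab.eq_or_lt with rfl | hlt
  · simp [amod]
  · simp [amod, Nat.mod_eq_of_lt hlt, ha.ne']

theorem amod_eq_iff (ht : 0 < t) (htb : t ≤ b) : amod a b = t ↔ a % b = t % b := by
  constructor
  · rintro rfl
    unfold amod; split <;> simp_all
  · intro h
    rw [amod_congr h, amod_of_le ht htb]

end Amod

namespace Relation.EqvGen

variable {α β : Type*} {r : α → α → Prop} {x y : α}

theorem rel_of_le {R : α → α → Prop} (hR : Equivalence R) (h : r ≤ R) (hxy : EqvGen r x y) :
    R x y :=
  hR.eqvGen_iff.mp (EqvGen.mono h x y hxy)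

theorem map {r' : β → β → Prop} (f : α → β) (h : ∀ a b, r a b → EqvGen r' (f a) (f b))
    (hxy : EqvGen r x y) : EqvGen r' (f x) (f y) :=
  hxy.rel_of_le (R := fun a b => EqvGen r' (f a) (f b)) ((EqvGen.is_equivalence r').comap f) h

theorem eq_of_isolated (hy : ∀ a b, r a b → a ≠ y ∧ b ≠ y) (hxy : EqvGen r x y) : x = y :=
  (hxy.rel_of_le (r := r) (R := fun a b => a = y ↔ b = y) ⟨fun _ => Iff.rfl, Iff.symm, Iff.trans⟩
    (fun a b hab => by simp [(hy a b hab).1, (hy a b hab).2])).mpr rfl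

theorem _root_.Equivalence.rel_swap_apply [DecidableEq α] {R : α → α → Prop}
    (hR : Equivalence R) (hxy : R x y) (w : α) : R w (swap x y w) := by
  rcases eq_or_ne w x with rfl | hwx
  · rwa [swap_apply_left]
  rcases eq_or_ne w y with rfl | hwy
  · rw [swap_apply_right]; exact hR.symm hxy
  rw [swap_apply_of_ne_of_ne hwx hwy]; exact hR.refl w

end Relation.EqvGen

namespace Equiv.Perm

variable {α : Type*} {σ : Perm α} {x y : α}

theorem SameCycle.rel_of_forall_rel_apply {R : α → α → Prop} (hR : Equivalence R)
    (h : ∀ z, R z (σ z)) (hxy : σ.SameCycle x y) : R x y := by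
  obtain ⟨i, rfl⟩ := hxy
  induction i using Int.induction_on with
  | zero => exact hR.refl x
  | succ i ih => rw [add_comm, zpow_one_add, mul_apply]; exact hR.trans ih (h _)
  | pred i ih =>
    have := h ((σ ^ (-(i : ℤ) - 1)) x)
    rw [← mul_apply, ← zpow_one_add, add_sub_cancel] at this
    exact hR.trans ih (hR.symm this)

theorem orbit_zpowers_eq_setOf_sameCycle :
    orbit (Subgroup.zpowers σ) x = {y | σ.SameCycle x y} := by
  ext y
  simp only [mem_orbit_iff, Subtype.exists, Subgroup.mem_zpowers_iff, Set.mem_ofPred_eq]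
  constructor
  · rintro ⟨_, ⟨i, rfl⟩, rfl⟩; exact ⟨i, rfl⟩
  · rintro ⟨i, rfl⟩; exact ⟨_, ⟨i, rfl⟩, rfl⟩

theorem minimalPeriod_eq_card_of_sameCycle_iff {C : Finset α}
    (hC : ∀ y, y ∈ C ↔ σ.SameCycle x y) : minimalPeriod σ x = C.card := by
  have horbit : orbit (Subgroup.zpowers σ) x = C := by
    rw [orbit_zpowers_eq_setOf_sameCycle]; ext y; simp [hC]
  have : Fintype (orbit (Subgroup.zpowers σ) x) := by rw [horbit]; infer_instance
  rw [show minimalPeriod σ x = minimalPeriod (σ • ·) x from rfl, minimalPeriod_eq_card,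
    ← Nat.card_eq_fintype_card, horbit, Nat.card_coe_set_eq, Set.ncard_coe_finset]

theorem mem_periodicPts_of_finite (h : {y | σ.SameCycle x y}.Finite) : x ∈ periodicPts σ := by
  rw [← orbit_zpowers_eq_setOf_sameCycle] at h
  have := h.to_subtype
  rw [← minimalPeriod_pos_iff_mem_periodicPts]
  exact Nat.pos_of_ne_zero (NeZero.ne (minimalPeriod (σ • ·) x))

theorem isLeast_zpow_apply_eq_self {C : Finset α} (hC : ∀ y, y ∈ C ↔ σ.SameCycle x y) :
    IsLeast {n : ℤ | 1 ≤ n ∧ (σ ^ n) x = x} C.card := by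
  have hpos : 0 < minimalPeriod σ x := minimalPeriod_pos_iff_mem_periodicPts.mpr
    (mem_periodicPts_of_finite (C.finite_toSet.subset fun y hy => (hC y).mpr hy))
  have hdvd : ∀ n : ℤ, (σ ^ n) x = x ↔ (minimalPeriod σ x : ℤ) ∣ n := fun n =>
    zpow_smul_eq_iff_minimalPeriod_dvd (a := σ)
  rw [← minimalPeriod_eq_card_of_sameCycle_iff hC]
  refine ⟨⟨by omega, (hdvd _).mpr dvd_rfl⟩, fun n ⟨hn, hnx⟩ => ?_⟩
  exact Int.le_of_dvd (by omega) ((hdvd n).mp hnx)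

variable [DecidableEq α]

theorem sameCycle_swap_mul_of_not_sameCycle (hx : x ∈ periodicPts σ)
    (hxy : ¬σ.SameCycle x y) : (swap x y * σ).SameCycle x y := by
  set n := minimalPeriod σ x
  have hn : 0 < n := minimalPeriod_pos_iff_mem_periodicPts.mpr hx
  have hagree : ∀ i < n, ((swap x y * σ) ^ i) x = (σ ^ i) x := by
    intro i
    induction i with
    | zero => simp
    | succ i ih =>
      intro hi
      rw [pow_succ', mul_apply, ih (by omega), mul_apply, ← mul_apply σ, ← pow_succ']
      refine swap_apply_of_ne_of_ne ?_ fun hy => hxy ⟨(i + 1 : ℕ), by rw [zpow_natCast, hy]⟩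
      rw [← iterate_eq_pow]
      exact not_isPeriodicPt_of_pos_of_lt_minimalPeriod (by omega) hi
  refine ⟨(n : ℕ), ?_⟩
  obtain ⟨m, hm⟩ : ∃ m, n = m + 1 := ⟨n - 1, by omega⟩
  rw [zpow_natCast, hm, pow_succ', mul_apply, hagree m (by omega), mul_apply, ← mul_apply σ,
    ← pow_succ', ← hm, ← iterate_eq_pow, iterate_minimalPeriod, swap_apply_left]

theorem SameCycle.swap_mul (hxy : (swap x y * σ).SameCycle x y) {u v : α}
    (huv : σ.SameCycle u v) : (swap x y * σ).SameCycle u v := by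
  refine huv.rel_of_forall_rel_apply (SameCycle.equivalence _) fun w => ?_
  have hw : σ w = swap x y ((swap x y * σ) w) := by rw [mul_apply, swap_apply_self]
  rw [hw]
  exact (sameCycle_apply_right.mpr (SameCycle.refl _ w)).trans
    ((SameCycle.equivalence _).rel_swap_apply hxy _)

end Equiv.Perm

/-- The edge `j — τ_j(j)` for `1 ≤ j ≤ b`, oriented from `j`; only the equivalence relation it
generates is used. -/
def tauEdge (q p b j y : ℕ) : Prop := 1 ≤ j ∧ j ≤ b ∧ y = amod (j + q - p) q

section TauEdge

variable {q p b : ℕ}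

theorem tauEdge_mono {b' : ℕ} (hb : b ≤ b') : tauEdge q p b ≤ tauEdge q p b' :=
  fun _ _ ⟨hj, hjb, hy⟩ => ⟨hj, hjb.trans hb, hy⟩

theorem amod_of_le_sub (hpq : p ≤ q) {j : ℕ} (hj : 1 ≤ j) (hjp : j ≤ p) :
    amod (j + q - p) q = j + (q - p) :=
  (congrArg (amod · q) (by omega : j + q - p = j + (q - p))).trans
    (amod_of_le (by omega) (by omega))

theorem amod_of_sub_lt (hpj : p < j) (hjq : j ≤ q) : amod (j + q - p) q = j - p := by
  rw [show j + q - p = j - p + q by omega, amod_add_self, amod_of_le (by omega) (by omega)]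

theorem tauEdge_iff_of_le (hpq : p ≤ q) (hbp : b ≤ p) {x y : ℕ} :
    tauEdge q p b x y ↔ 1 ≤ x ∧ x ≤ b ∧ y = x + (q - p) := by
  unfold tauEdge
  constructor
  · rintro ⟨hx, hxb, rfl⟩; exact ⟨hx, hxb, amod_of_le_sub hpq hx (hxb.trans hbp)⟩
  · rintro ⟨hx, hxb, rfl⟩; exact ⟨hx, hxb, (amod_of_le_sub hpq hx (hxb.trans hbp)).symm⟩

theorem eqvGen_tauEdge_mem_Icc_iff (hbq : b ≤ q) {x y : ℕ}
    (hxy : EqvGen (tauEdge q p b) x y) : x ∈ Icc 1 q ↔ y ∈ Icc 1 q := by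
  refine hxy.rel_of_le (R := fun a b => a ∈ Icc 1 q ↔ b ∈ Icc 1 q)
    ⟨fun _ => Iff.rfl, Iff.symm, Iff.trans⟩ fun j y ⟨hj, hjb, hy⟩ => ?_
  have hq : 0 < q := by omega
  have := amod_pos (a := j + q - p) hq
  have := amod_le (a := j + q - p) hq
  simp only [mem_Icc, hy]
  omega

theorem eqvGen_tauEdge_amod (hpq : p < q) {u : ℕ} (hu : 1 ≤ u) (huq : u ≤ q)
    (hub : u ≤ b + (q - p)) : EqvGen (tauEdge q p b) u (amod u (q - p)) := by
  induction u using Nat.strong_induction_on with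
  | _ u ih =>
    by_cases hud : u ≤ q - p
    · rw [amod_of_le hu hud]; exact EqvGen.refl u
    have hedge : tauEdge q p b (u - (q - p)) u :=
      ⟨by omega, by omega, by rw [amod_of_le_sub hpq.le (by omega) (by omega)]; omega⟩
    have hres : amod (u - (q - p)) (q - p) = amod u (q - p) := by
      rw [← amod_add_self, Nat.sub_add_cancel (by omega)]
    exact (EqvGen.rel _ _ hedge).symm _ _ |>.trans _ _ _
      (hres ▸ ih _ (by omega) (by omega) (by omega) (by omega))

end TauEdge

/-- With `(q_0, p_0) = (q, q - p)`, the pair `(q_1, p_1) = (q - p, q mod (q - p))` is again of the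
form `(q', q' - p')` for `q' = q - p` and `p' = nextP q p`. -/
def nextP (q p : ℕ) : ℕ := (q - p) - q % (q - p)

section Renormalization

variable {q p b : ℕ}

theorem Nat.Coprime.lt_of_le (hcop : Nat.Coprime p q) (hpq : p ≤ q) (hq : 1 < q) : p < q :=
  hpq.lt_of_ne fun h => by subst h; rw [Nat.coprime_self] at hcop; omega

theorem Nat.Coprime.nextP (hcop : Nat.Coprime p q) (hpq : p < q) :
    Nat.Coprime (nextP q p) (q - p) := by
  have hdq : Nat.Coprime (q - p) q := (Nat.coprime_self_sub_left hpq.le).mpr hcop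
  have hrd : Nat.Coprime (q % (q - p)) (q - p) := by
    rw [Nat.Coprime, ← Nat.gcd_rec]; exact hdq
  exact (Nat.coprime_self_sub_left (Nat.mod_lt _ (by omega)).le).mpr hrd

theorem amod_sub_nextP (hpq : p < q) (i : ℕ) :
    amod (i + (q - p) - nextP q p) (q - p) = amod (i + p) (q - p) := by
  have hr : q % (q - p) < q - p := Nat.mod_lt _ (by omega)
  have hq : q % (q - p) = p % (q - p) := by
    simpa only [Nat.add_sub_cancel' hpq.le] using Nat.add_mod_right p (q - p)
  apply amod_congr
  rw [nextP, show i + (q - p) - (q - p - q % (q - p)) = i + q % (q - p) by omega, hq,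
    Nat.add_mod_mod]

/-- Once `b ≥ p` every point is joined to its residue mod `q - p`, and on residues the wrapping
edges `j — j - p` (`p < j ≤ p + c`) are the edges of the graph of `(q - p, nextP q p)` with
threshold `c`. -/
theorem eqvGen_tauEdge_iff_nextP (hpq : p < q) {c : ℕ} (hc : c < q - p) {x y : ℕ}
    (hx : x ∈ Icc 1 q) (hy : y ∈ Icc 1 q) :
    EqvGen (tauEdge q p (p + c)) x y ↔
      EqvGen (tauEdge (q - p) (nextP q p) c) (amod x (q - p)) (amod y (q - p)) := by
  rw [mem_Icc] at hx hy
  have hres : ∀ u, 1 ≤ u → u ≤ q → EqvGen (tauEdge q p (p + c)) u (amod u (q - p)) :=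
    fun u hu huq => eqvGen_tauEdge_amod hpq hu huq (by omega)
  constructor
  · refine EqvGen.map (amod · (q - p)) fun j y ⟨hj, hjb, hy⟩ => ?_
    subst hy
    by_cases hjp : j ≤ p
    · rw [amod_of_le_sub hpq.le hj hjp, amod_add_self]; exact EqvGen.refl _
    obtain ⟨i, rfl⟩ : ∃ i, j = i + p := ⟨j - p, by omega⟩
    rw [amod_of_sub_lt (by omega) (by omega), Nat.add_sub_cancel, amod_of_le (a := i) (by omega)
      (by omega), ← amod_sub_nextP hpq]
    exact (EqvGen.rel _ _ ⟨by omega, by omega, rfl⟩).symm _ _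
  · intro h
    refine (hres x hx.1 hx.2).trans _ _ _ (EqvGen.trans _ _ _ ?_ ((hres y hy.1 hy.2).symm _ _))
    refine EqvGen.map id (fun i y ⟨hi, hic, hy⟩ => ?_) h
    have hwrap : tauEdge q p (p + c) (i + p) i :=
      ⟨by omega, by omega, by rw [amod_of_sub_lt (by omega) (by omega), Nat.add_sub_cancel]⟩
    rw [hy, amod_sub_nextP hpq]
    exact ((EqvGen.rel _ _ hwrap).symm _ _).trans _ _ _ (hres _ (by omega) (by omega))

/-- For `b + 1 ≤ p` the partner `b + 1 + (q - p)` of `b + 1` is still isolated; otherwise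
renormalize. -/
theorem not_eqvGen_tauEdge (hp : 0 < p) (hpq : p ≤ q) (hcop : Nat.Coprime p q)
    (hb : b + 1 < q) : ¬EqvGen (tauEdge q p b) (b + 1) (amod (b + 1 + q - p) q) := by
  induction q using Nat.strong_induction_on generalizing p b with
  | _ q ih =>
    replace hpq : p < q := hcop.lt_of_le hpq (by omega)
    intro hconn
    by_cases hbp : b + 1 ≤ p
    · rw [amod_of_le_sub hpq.le (by omega) hbp] at hconn
      have := hconn.eq_of_isolated fun x y hxy => by
        rw [tauEdge_iff_of_le hpq.le (by omega)] at hxy; omega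
      omega
    obtain ⟨c, rfl⟩ : ∃ c, b = p + c := ⟨b - p, by omega⟩
    rw [amod_of_sub_lt (by omega) (by omega), show p + c + 1 - p = c + 1 by omega,
      eqvGen_tauEdge_iff_nextP hpq (by omega) (by simp; omega) (by simp; omega),
      show p + c + 1 = c + 1 + p by omega, ← amod_sub_nextP hpq,
      amod_of_le (a := c + 1) (by omega) (by omega)] at hconn
    have hr : q % (q - p) < q - p := Nat.mod_lt _ (by omega)
    exact ih (q - p) (by omega) (by unfold nextP; omega) (by unfold nextP; omega)
      (hcop.nextP hpq) (by omega) (hconn.symm _ _)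

end Renormalization

section Monodromy

open Equiv.Perm

variable {q p b : ℕ}

/-- Multiplying by `τ_{b+1}` merges the cycles of its two endpoints, which are distinct by
`not_eqvGen_tauEdge`. -/
theorem sameCycle_sigma_iff (hp : 0 < p) (hpq : p ≤ q) (hcop : Nat.Coprime p q) (hb : b < q)
    {x y : ℕ} : (sigma q p b).SameCycle x y ↔ EqvGen (tauEdge q p b) x y := by
  induction b generalizing x y with
  | zero =>
    rw [sigma, sameCycle_one]
    refine ⟨fun h => h ▸ EqvGen.refl x, fun h => ?_⟩
    exact h.rel_of_le (R := Eq) ⟨Eq.refl, Eq.symm, Eq.trans⟩ fun _ _ ⟨hj, hj0, _⟩ => by omega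
  | succ b ih =>
    have ih' : ∀ x y, (sigma q p b).SameCycle x y ↔ EqvGen (tauEdge q p b) x y :=
      fun x y => ih (by omega)
    have hsplit : sigma q p (b + 1) = swap (b + 1) (amod (b + 1 + q - p) q) * sigma q p b := rfl
    have hdisjoint : ¬(sigma q p b).SameCycle (b + 1) (amod (b + 1 + q - p) q) :=
      fun h => not_eqvGen_tauEdge hp hpq hcop hb ((ih' _ _).mp h)
    have hperiodic : b + 1 ∈ periodicPts (sigma q p b) :=
      mem_periodicPts_of_finite ((Icc 1 q).finite_toSet.subset fun y hy =>
        (eqvGen_tauEdge_mem_Icc_iff (by omega) ((ih' _ _).mp hy)).mp (by simp; omega))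
    have hmerge : (sigma q p (b + 1)).SameCycle (b + 1) (amod (b + 1 + q - p) q) :=
      hsplit ▸ sameCycle_swap_mul_of_not_sameCycle hperiodic hdisjoint
    constructor
    · refine fun h => h.rel_of_forall_rel_apply (EqvGen.is_equivalence _) fun z => ?_
      have hz : EqvGen (tauEdge q p (b + 1)) z (sigma q p b z) :=
        EqvGen.mono (tauEdge_mono (by omega)) _ _
          ((ih' _ _).mp (sameCycle_apply_right.mpr (SameCycle.refl _ _)))
      rw [hsplit, mul_apply]
      exact hz.trans _ _ _ ((EqvGen.is_equivalence _).rel_swap_apply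
        (EqvGen.rel _ _ ⟨by omega, le_rfl, rfl⟩) _)
    · refine fun h => h.rel_of_le (SameCycle.equivalence _) fun u v ⟨hu, hub, hv⟩ => ?_
      rcases hub.lt_or_eq with hub | rfl
      · rw [hsplit] at hmerge ⊢
        exact hmerge.swap_mul ((ih' u v).mpr (EqvGen.rel _ _ ⟨hu, by omega, hv⟩))
      · exact hv ▸ hmerge

end Monodromy

section Counting

variable {d t : ℕ}

theorem card_filter_amod_eq (hd : 0 < d) (ht : 1 ≤ t) (htd : t ≤ d) (M : ℕ) :
    #{u ∈ Icc 1 M | amod u d = t} = M / d + if t ≤ M % d then 1 else 0 := by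
  have hIcc : Icc 1 M = (range M).map (addRightEmbedding 1) := by
    ext u; simp only [mem_Icc, mem_map, mem_range, addRightEmbedding_apply]
    constructor
    · intro hu; exact ⟨u - 1, by omega, by omega⟩
    · rintro ⟨v, hv, rfl⟩; omega
  have hmod : ∀ v, amod (v + 1) d = t ↔ v ≡ t - 1 [MOD d] := fun v => by
    rw [amod_eq_iff ht htd, ← Nat.ModEq, show t = t - 1 + 1 by omega, Nat.add_sub_cancel]
    exact ⟨Nat.ModEq.add_right_cancel' 1, (Nat.ModEq.add_right 1 ·)⟩
  rw [hIcc, filter_map, card_map]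
  simp only [Function.comp_def, addRightEmbedding_apply, hmod]
  rw [← Nat.count_eq_card_filter_range, Nat.count_modEq_card _ hd, Nat.mod_eq_of_lt (by omega)]
  congr 1
  split_ifs <;> omega

theorem card_filter_amod_mem (hd : 0 < d) {C : Finset ℕ} (hC : C ⊆ Icc 1 d) (M : ℕ) :
    #{u ∈ Icc 1 M | amod u d ∈ C} = M / d * #C + #{t ∈ C | t ≤ M % d} := by
  rw [card_eq_sum_card_fiberwise (s := {u ∈ Icc 1 M | amod u d ∈ C}) (t := C) (f := (amod · d))
    fun u hu => (mem_filter.mp hu).2]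
  have hfiber : ∀ t ∈ C, #{u ∈ {u ∈ Icc 1 M | amod u d ∈ C} | amod u d = t} =
      M / d + if t ≤ M % d then 1 else 0 := fun t ht => by
    rw [filter_filter, ← card_filter_amod_eq hd (mem_Icc.mp (hC ht)).1 (mem_Icc.mp (hC ht)).2]
    exact congrArg card (filter_congr fun u _ => ⟨And.right, fun h => ⟨h ▸ ht, h⟩⟩)
  rw [sum_congr rfl hfiber, sum_add_distrib, sum_const, smul_eq_mul, sum_boole, mul_comm,
    Nat.cast_id]

theorem natCast_succ_div_add_ite {l : ℕ} (hd : 0 < d) (hl : 1 ≤ l) (hld : l ≤ d) (b : ℕ) :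
    (((b + d) / d + if l ≤ (b + d) % d then 1 else 0 : ℕ) : ℤ) =
      Int.fdiv ((b : ℤ) - 1) d + if amod b d < l then 1 else 2 := by
  obtain ⟨k, r, hr, rfl⟩ : ∃ k r, r < d ∧ b = d * k + r :=
    ⟨b / d, b % d, Nat.mod_lt _ hd, (Nat.div_add_mod b d).symm⟩
  have hdiv : (d * k + r + d) / d = k + 1 := by
    rw [show d * k + r + d = r + d * (k + 1) by ring, Nat.add_mul_div_left _ _ hd,
      Nat.div_eq_of_lt hr, zero_add]
  have hmod : (d * k + r + d) % d = r := by
    rw [show d * k + r + d = r + d * (k + 1) by ring, Nat.add_mul_mod_self_left,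
      Nat.mod_eq_of_lt hr]
  have hamod : amod (d * k + r) d = amod r d := amod_congr (by simp)
  rw [Int.fdiv_eq_ediv_of_nonneg _ (by positivity), hdiv, hmod, hamod]
  rcases Nat.eq_zero_or_pos r with rfl | hr0
  · have hq : ((d * k + 0 : ℕ) - 1 : ℤ) / d = k - 1 :=
      ((Int.ediv_emod_unique (by omega) (r := d - 1)).mpr
        ⟨by push_cast; ring, by omega, by omega⟩).1
    simp only [amod, Nat.zero_mod, ↓reduceIte, hq]
    split_ifs <;> push_cast <;> omega
  · have hq : ((d * k + r : ℕ) - 1 : ℤ) / d = k :=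
      ((Int.ediv_emod_unique (by omega) (r := r - 1)).mpr
        ⟨by push_cast; ring, by omega, by omega⟩).1
    rw [hq, amod_of_le hr0 hr.le]
    split_ifs <;> push_cast <;> omega

end Counting

/-- Denominators of the convergents of `q / (q - p)`, shifted like `Pseq`. -/
def Qseq (q p : ℕ) : ℕ → ℤ
  | 0 => 1
  | 1 => 0
  | n + 2 => (aSeq q p n : ℤ) * Qseq q p (n + 1) + Qseq q p n

/-- The right-hand side of the period formula, for an arbitrary sequence `X` in place of the
numerators `Pseq q p` of the convergents. -/
def periodFormula (X : ℕ → ℤ) (q p b h s : ℕ) : ℤ :=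
  if lSeq q p s h ≤ b - bSeq q p h + (qpSeq q p h).2 then
    if amod (b - bSeq q p h) (qpSeq q p h).2 < amod (lSeq q p s h) (qpSeq q p h).2 then
      X h + (Int.fdiv ((b : ℤ) - (bSeq q p h : ℤ) - 1) ((qpSeq q p h).2 : ℤ) + 1) * X (h + 1)
    else
      X h + (Int.fdiv ((b : ℤ) - (bSeq q p h : ℤ) - 1) ((qpSeq q p h).2 : ℤ) + 2) * X (h + 1)
  else X (h + 1)

section Sequences

variable {q p : ℕ}

theorem bSeq_monotone : Monotone (bSeq q p) :=
  monotone_nat_of_le_succ fun _ => Nat.le_add_right _ _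

theorem bSeq_one (hpq : p ≤ q) : bSeq q p 1 = p := by
  simp [bSeq, qpSeq]; omega

theorem periodFormula_zero (X : ℕ → ℤ) (b s : ℕ) :
    periodFormula X q p b 0 s =
      if s ≤ b + (q - p) then
        if amod b (q - p) < amod s (q - p) then
          X 0 + (Int.fdiv ((b : ℤ) - 1) ((q - p : ℕ) : ℤ) + 1) * X 1
        else X 0 + (Int.fdiv ((b : ℤ) - 1) ((q - p : ℕ) : ℤ) + 2) * X 1
      else X 1 := by
  simp [periodFormula, bSeq, lSeq, qpSeq]

theorem periodFormula_mul_add (a : ℤ) (X Y : ℕ → ℤ) (b h s : ℕ) :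
    periodFormula (fun n => a * X n + Y n) q p b h s =
      a * periodFormula X q p b h s + periodFormula Y q p b h s := by
  unfold periodFormula; split_ifs <;> ring

theorem qpSeq_succ (hpq : p < q) (k : ℕ) :
    qpSeq q p (k + 1) = qpSeq (q - p) (nextP q p) k := by
  induction k with
  | zero =>
    have : q % (q - p) < q - p := Nat.mod_lt _ (by omega)
    simp only [qpSeq, nextP, Prod.mk.injEq, true_and]
    omega
  | succ k ih => rw [qpSeq, ih, ← qpSeq]

theorem aSeq_succ (hpq : p < q) (k : ℕ) :
    aSeq q p (k + 1) = aSeq (q - p) (nextP q p) k := by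
  rw [aSeq, qpSeq_succ hpq, aSeq]

theorem bSeq_succ (hpq : p < q) (k : ℕ) :
    bSeq q p (k + 1) = p + bSeq (q - p) (nextP q p) k := by
  induction k with
  | zero => exact bSeq_one hpq.le
  | succ k ih => rw [bSeq, ih, qpSeq_succ hpq, bSeq, Nat.add_assoc]

theorem lSeq_succ (hpq : p < q) (s h : ℕ) :
    lSeq q p s (h + 1) = lSeq (q - p) (nextP q p) (amod s (q - p)) h := by
  induction h with
  | zero => rfl
  | succ h ih => rw [lSeq, ih, qpSeq_succ hpq, lSeq]

theorem Pseq_succ_Qseq_succ (hpq : p < q) (n : ℕ) :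
    Pseq q p (n + 1) = aSeq q p 0 * Pseq (q - p) (nextP q p) n + Qseq (q - p) (nextP q p) n ∧
      Qseq q p (n + 1) = Pseq (q - p) (nextP q p) n := by
  induction n using Nat.strong_induction_on with
  | _ n ih =>
    match n, ih with
    | 0, _ => simp [Pseq, Qseq]
    | 1, _ => simp [Pseq, Qseq, aSeq]
    | n + 2, ih =>
      obtain ⟨hP1, hQ1⟩ := ih (n + 1) (by omega)
      obtain ⟨hP0, hQ0⟩ := ih n (by omega)
      show Pseq q p (n + 1 + 2) = _ ∧ Qseq q p (n + 1 + 2) = _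
      rw [Pseq.eq_3 q p, Qseq.eq_3 q p, aSeq_succ hpq, hP1, hQ1, hP0, hQ0, Pseq.eq_3 (q - p),
        Qseq.eq_3 (q - p)]
      constructor <;> ring

theorem periodFormula_succ (hpq : p < q) (X : ℕ → ℤ) {c h : ℕ}
    (hc : bSeq (q - p) (nextP q p) h ≤ c) (s : ℕ) :
    periodFormula X q p (p + c) (h + 1) s =
      periodFormula (fun n => X (n + 1)) (q - p) (nextP q p) c h (amod s (q - p)) := by
  have hb : p + c - bSeq q p (h + 1) = c - bSeq (q - p) (nextP q p) h := by
    rw [bSeq_succ hpq]; omega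
  have hbz : ((p + c : ℕ) : ℤ) - (bSeq q p (h + 1) : ℤ) =
      (c : ℤ) - (bSeq (q - p) (nextP q p) h : ℤ) := by
    rw [bSeq_succ hpq]; push_cast; ring
  unfold periodFormula
  rw [lSeq_succ hpq, qpSeq_succ hpq, hb, hbz]

end Sequences

open Classical in
noncomputable def componentIcc (q p b s M : ℕ) : Finset ℕ :=
  {x ∈ Icc 1 M | EqvGen (tauEdge q p b) s x}

section Components

variable {q p b s : ℕ}

theorem mem_componentIcc {M x : ℕ} :
    x ∈ componentIcc q p b s M ↔ x ∈ Icc 1 M ∧ EqvGen (tauEdge q p b) s x := by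
  classical
  simp [componentIcc]

theorem eqvGen_tauEdge_iff_of_le (hpq : p < q) (hbp : b ≤ p) {x y : ℕ}
    (hx : x ∈ Icc 1 (b + (q - p))) :
    EqvGen (tauEdge q p b) x y ↔ y ∈ Icc 1 (b + (q - p)) ∧ amod y (q - p) = amod x (q - p) := by
  rw [mem_Icc] at hx
  constructor
  · intro h
    have key := h.rel_of_le (R := fun u v => (u ∈ Icc 1 (b + (q - p)) ↔ v ∈ Icc 1 (b + (q - p)))
        ∧ amod u (q - p) = amod v (q - p))
      ⟨fun _ => ⟨Iff.rfl, rfl⟩, fun h => ⟨h.1.symm, h.2.symm⟩,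
        fun h h' => ⟨h.1.trans h'.1, h.2.trans h'.2⟩⟩ fun u v huv => by
      obtain ⟨hu, hub, rfl⟩ := (tauEdge_iff_of_le hpq.le hbp).mp huv
      simp only [mem_Icc, amod_add_self, and_true]
      omega
    exact ⟨key.1.mp (mem_Icc.mpr hx), key.2.symm⟩
  · rintro ⟨hy, hxy⟩
    rw [mem_Icc] at hy
    exact (eqvGen_tauEdge_amod hpq hx.1 (by omega) hx.2).trans _ _ _
      (hxy ▸ (eqvGen_tauEdge_amod hpq hy.1 (by omega) hy.2).symm _ _)

theorem eqvGen_tauEdge_iff_eq_of_lt (hpq : p ≤ q) (hbp : b ≤ p) {x y : ℕ}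
    (hx : b + (q - p) < x) : EqvGen (tauEdge q p b) x y ↔ y = x :=
  ⟨fun h => ((h.symm _ _).eq_of_isolated fun u v huv => by
    rw [tauEdge_iff_of_le hpq hbp] at huv; omega), by rintro rfl; exact EqvGen.refl _⟩

theorem card_componentIcc_of_lt (hp : 0 < p) (hpq : p ≤ q) (hcop : Nat.Coprime p q)
    (hbp : b < p) (hs : s ∈ Icc 1 q) :
    (#(componentIcc q p b s q) : ℤ) = periodFormula (Pseq q p) q p b 0 s ∧
      (#(componentIcc q p b s (q - p)) : ℤ) = periodFormula (Qseq q p) q p b 0 s := by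
  rw [mem_Icc] at hs
  simp only [periodFormula_zero, Pseq, Qseq]
  by_cases hsb : s ≤ b + (q - p)
  · have hd : 0 < q - p := Nat.sub_pos_of_lt (hcop.lt_of_le hpq (by omega))
    have hcomp : ∀ M, M ≤ q → componentIcc q p b s M =
        {u ∈ Icc 1 (min M (b + (q - p))) | amod u (q - p) = amod s (q - p)} := fun M hM => by
      ext u
      simp only [mem_componentIcc, mem_filter, mem_Icc,
        eqvGen_tauEdge_iff_of_le (by omega) hbp.le (mem_Icc.mpr ⟨hs.1, hsb⟩)]
      omega
    have hl := amod_pos (a := s) hd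
    have hld := amod_le (a := s) hd
    rw [if_pos hsb, if_pos hsb, hcomp q le_rfl, hcomp (q - p) (by omega),
      min_eq_right (by omega), min_eq_left (by omega), card_filter_amod_eq hd hl hld,
      natCast_succ_div_add_ite hd hl hld, card_filter_amod_eq hd hl hld, Nat.div_self hd,
      Nat.mod_self, if_neg (show ¬amod s (q - p) ≤ 0 by omega)]
    constructor <;> split_ifs <;> push_cast <;> ring
  · have hsingle : ∀ M, componentIcc q p b s M = {u ∈ Icc 1 M | u = s} := fun M => by
      ext u
      simp only [mem_componentIcc, mem_filter,
        eqvGen_tauEdge_iff_eq_of_lt hpq hbp.le (not_le.mp hsb)]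
    rw [if_neg hsb, if_neg hsb, hsingle, hsingle, filter_eq', filter_eq', if_pos (by simp; omega),
      if_neg (by simp; omega)]
    simp

theorem componentIcc_add (hpq : p < q) {c M : ℕ} (hc : c < q - p) (hs : s ∈ Icc 1 q)
    (hM : M ≤ q) :
    componentIcc q p (p + c) s M = {u ∈ Icc 1 M |
      amod u (q - p) ∈ componentIcc (q - p) (nextP q p) c (amod s (q - p)) (q - p)} := by
  ext u
  simp only [mem_componentIcc, mem_filter]
  refine and_congr_right fun hu => ?_
  rw [eqvGen_tauEdge_iff_nextP hpq hc hs (Icc_subset_Icc_right hM hu), mem_Icc]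
  exact ⟨fun h => ⟨⟨amod_pos (by omega), amod_le (by omega)⟩, h⟩, And.right⟩

theorem card_componentIcc_add (hpq : p < q) {c : ℕ} (hc : c < q - p) (hs : s ∈ Icc 1 q) :
    #(componentIcc q p (p + c) s q) =
        q / (q - p) * #(componentIcc (q - p) (nextP q p) c (amod s (q - p)) (q - p)) +
          #(componentIcc (q - p) (nextP q p) c (amod s (q - p)) (q - p - nextP q p)) ∧
      #(componentIcc q p (p + c) s (q - p)) =
        #(componentIcc (q - p) (nextP q p) c (amod s (q - p)) (q - p)) := by
  have hd : 0 < q - p := by omega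
  have hr : q % (q - p) < q - p := Nat.mod_lt _ hd
  set C' := componentIcc (q - p) (nextP q p) c (amod s (q - p)) (q - p)
  have hC' : C' ⊆ Icc 1 (q - p) := fun t ht => (mem_componentIcc.mp ht).1
  rw [componentIcc_add hpq hc hs le_rfl, componentIcc_add hpq hc hs (by omega),
    card_filter_amod_mem hd hC']
  constructor
  · rw [show q - p - nextP q p = q % (q - p) by unfold nextP; omega]
    congr 2
    ext t
    simp only [C', mem_filter, mem_componentIcc, mem_Icc]
    exact ⟨fun ⟨⟨⟨h1, _⟩, hE⟩, h2⟩ => ⟨⟨h1, h2⟩, hE⟩,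
      fun ⟨⟨h1, h2⟩, hE⟩ => ⟨⟨⟨h1, by omega⟩, hE⟩, h2⟩⟩
  · congr 1
    ext u
    simp only [mem_filter]
    constructor
    · rintro ⟨hu, hC⟩; rwa [amod_of_le (mem_Icc.mp hu).1 (mem_Icc.mp hu).2] at hC
    · intro hu
      have hu' := mem_Icc.mp (hC' hu)
      exact ⟨hC' hu, by rwa [amod_of_le hu'.1 hu'.2]⟩

theorem card_componentIcc {h : ℕ} (hp : 0 < p) (hpq : p ≤ q) (hcop : Nat.Coprime p q)
    (hb : b < q) (hh1 : bSeq q p h ≤ b) (hh2 : b < bSeq q p (h + 1)) (hs : s ∈ Icc 1 q) :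
    (#(componentIcc q p b s q) : ℤ) = periodFormula (Pseq q p) q p b h s ∧
      (#(componentIcc q p b s (q - p)) : ℤ) = periodFormula (Qseq q p) q p b h s := by
  induction q using Nat.strong_induction_on generalizing p b h s with
  | _ q ih =>
    rcases lt_or_ge b p with hbp | hpb
    · obtain rfl : h = 0 := by
        by_contra hh
        have := bSeq_monotone (q := q) (p := p) (show 1 ≤ h by omega)
        rw [bSeq_one hpq] at this
        omega
      exact card_componentIcc_of_lt hp hpq hcop hbp hs
    replace hpq : p < q := by omega
    obtain ⟨c, rfl⟩ : ∃ c, b = p + c := ⟨b - p, by omega⟩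
    obtain ⟨h, rfl⟩ : ∃ h', h = h' + 1 := ⟨h - 1, by
      rcases h with _ | h
      · rw [zero_add, bSeq_one hpq.le] at hh2; omega
      · omega⟩
    rw [bSeq_succ hpq] at hh1 hh2
    have hr : q % (q - p) < q - p := Nat.mod_lt _ (by omega)
    obtain ⟨hP, hQ⟩ := ih (q - p) (by omega) (p := nextP q p) (b := c) (h := h)
      (s := amod s (q - p)) (by unfold nextP; omega) (by unfold nextP; omega)
      (hcop.nextP hpq) (by omega) (by omega) (by omega)
      (mem_Icc.mpr ⟨amod_pos (by omega), amod_le (by omega)⟩)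
    obtain ⟨hL, hN⟩ := card_componentIcc_add hpq (c := c) (by omega) hs
    have hPsucc : (fun n => Pseq q p (n + 1)) = fun n =>
        (q / (q - p) : ℕ) * Pseq (q - p) (nextP q p) n + Qseq (q - p) (nextP q p) n :=
      funext fun n => (Pseq_succ_Qseq_succ hpq n).1
    have hQsucc : (fun n => Qseq q p (n + 1)) = Pseq (q - p) (nextP q p) :=
      funext fun n => (Pseq_succ_Qseq_succ hpq n).2
    rw [periodFormula_succ hpq _ (by omega), periodFormula_succ hpq _ (by omega), hPsucc, hQsucc,
      periodFormula_mul_add, hL, hN, ← hP, ← hQ]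
    push_cast
    exact ⟨rfl, rfl⟩

end Components

/-- The period formula: the period of the s-th root of the curve
(w-1)^(q-p) w^p ξ^q = 1 along a circle enclosing the first b branch points. -/
theorem period_formula_rational (p q : ℕ) (hcop : Nat.Coprime p q) (hp : 0 < p)
    (hpq : p < q) (b : ℕ) (hb : b ≤ q - 1) (s : ℕ) (hs1 : 1 ≤ s) (hs2 : s ≤ q)
    (h : ℕ) (hh1 : bSeq q p h ≤ b) (hh2 : b < bSeq q p (h + 1)) :
    IsLeast {n : ℤ | 1 ≤ n ∧ ((sigma q p b) ^ n) s = s}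
      (if lSeq q p s h ≤ b - bSeq q p h + (qpSeq q p h).2 then
        (if amod (b - bSeq q p h) (qpSeq q p h).2
            < amod (lSeq q p s h) (qpSeq q p h).2 then
          Pseq q p h
            + (Int.fdiv ((b : ℤ) - (bSeq q p h : ℤ) - 1) ((qpSeq q p h).2 : ℤ) + 1)
              * Pseq q p (h + 1)
        else
          Pseq q p h
            + (Int.fdiv ((b : ℤ) - (bSeq q p h : ℤ) - 1) ((qpSeq q p h).2 : ℤ) + 2)
              * Pseq q p (h + 1))
      else Pseq q p (h + 1)) := by
  have hbq : b < q := by omega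
  have hs : s ∈ Icc 1 q := mem_Icc.mpr ⟨hs1, hs2⟩
  have hcycle : ∀ x, x ∈ componentIcc q p b s q ↔ (sigma q p b).SameCycle s x := fun x => by
    rw [mem_componentIcc, sameCycle_sigma_iff hp hpq.le hcop hbq]
    exact ⟨And.right, fun hx => ⟨(eqvGen_tauEdge_mem_Icc_iff hbq.le hx).mp hs, hx⟩⟩
  have hperiod := Perm.isLeast_zpow_apply_eq_self hcycle
  rw [(card_componentIcc hp hpq.le hcop hbq hh1 hh2 hs).1] at hperiod
  exact hperiod
end

section
/- Let p, q be integers with 0 < p < q, and let ξ, w₀ ∈ ℂ with ξ ≠ 0. Then the following are equivalent: (a) (w₀ − 1)^(q−p) · w₀^p · ξ^q = 1 and (q−p)·(w₀ − 1)^(q−p−1) · w₀^p + p·(w₀ − 1)^(q−p) · w₀^(p−1) = 0 (i.e., w₀ is a repeated root of the polynomial (w − 1)^(q−p) w^p ξ^q − 1); (b) w₀ = p/q and ξ^q · p^p · (q−p)^(q−p) = (−1)^(q−p) · q^q. In particular all movable branch points of the curve occur at w = μ = p/q, and there are exactly q of them, given by the q solutions ξ of ξ^q = (−1)^(q−p)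 q^q / (p^p (q−p)^(q−p)). -/
/-!
The derivative of `(w - 1) ^ (q - p) * w ^ p` factors as
`(w - 1) ^ (q - p - 1) * w ^ (p - 1) * (q * w - p)`. A point of the curve has `w ≠ 0` and
`w ≠ 1`, so it is a repeated root exactly when `w = p / q`; there `w - 1 = -(q - p) / q`, and
the curve equation becomes `ξ ^ q * p ^ p * (q - p) ^ (q - p) = (-1) ^ (q - p) * q ^ q`.
-/

section BranchPoints

variable {K : Type*} [Field K] {p q : ℕ}

theorem branch_derivative_factor {R : Type*} [CommRing R] (hp : 0 < p) (hpq : p < q) (w : R) :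
    ((q : R) - p) * (w - 1) ^ (q - p - 1) * w ^ p + p * (w - 1) ^ (q - p) * w ^ (p - 1)
      = (w - 1) ^ (q - p - 1) * w ^ (p - 1) * (q * w - p) := by
  obtain ⟨e, rfl⟩ : ∃ e, p = e + 1 := ⟨p - 1, by omega⟩
  obtain ⟨d, rfl⟩ : ∃ d, q = e + 1 + (d + 1) := ⟨q - (e + 1) - 1, by omega⟩
  rw [show e + 1 + (d + 1) - (e + 1) = d + 1 by omega]
  push_cast
  ring

theorem div_sub_one_eq_neg_div (hq : (q : K) ≠ 0) :
    (p : K) / q - 1 = -(((q : K) - p) / q) := by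
  field_simp
  ring

theorem curve_at_div_iff (hpq : p ≤ q) (hq : (q : K) ≠ 0) (ξ : K) :
    ((p : K) / q - 1) ^ (q - p) * ((p : K) / q) ^ p * ξ ^ q = 1 ↔
      ξ ^ q * (p : K) ^ p * ((q : K) - p) ^ (q - p) = (-1) ^ (q - p) * (q : K) ^ q := by
  have hqq : (q : K) ^ (q - p) * (q : K) ^ p = (q : K) ^ q := by
    rw [← pow_add, Nat.sub_add_cancel hpq]
  have hsign : ((-1 : K) ^ (q - p)) ^ 2 = 1 := by
    rw [← pow_mul, mul_comm, pow_mul, neg_one_sq, one_pow]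
  rw [div_sub_one_eq_neg_div hq, neg_pow, div_pow, div_pow]
  field_simp
  rw [hqq]
  constructor <;> intro h
  · linear_combination (-1 : K) ^ (q - p) * h
      - ξ ^ q * (p : K) ^ p * ((q : K) - p) ^ (q - p) * hsign
  · linear_combination (-1 : K) ^ (q - p) * h + (q : K) ^ q * hsign

end BranchPoints

theorem movable_branch_points_general (p q : ℕ) (hp : 0 < p) (hpq : p < q)
    (ξ w₀ : ℂ) :
    ((w₀ - 1) ^ (q - p) * w₀ ^ p * ξ ^ q = 1 ∧
      ((q : ℂ) - (p : ℂ)) * (w₀ - 1) ^ (q - p - 1) * w₀ ^ p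
        + (p : ℂ) * (w₀ - 1) ^ (q - p) * w₀ ^ (p - 1) = 0)
    ↔ (w₀ = (p : ℂ) / (q : ℂ) ∧
      ξ ^ q * (p : ℂ) ^ p * ((q : ℂ) - (p : ℂ)) ^ (q - p)
        = (-1) ^ (q - p) * (q : ℂ) ^ q) := by
  have hq : (q : ℂ) ≠ 0 := Nat.cast_ne_zero.2 (by omega)
  rw [branch_derivative_factor hp hpq]
  constructor
  · rintro ⟨hcurve, hcrit⟩
    have hw₀ : w₀ ≠ 0 :=
      (pow_ne_zero_iff hp.ne').1 (right_ne_zero_of_mul (left_ne_zero_of_mul_eq_one hcurve))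
    have hw₁ : w₀ - 1 ≠ 0 :=
      (pow_ne_zero_iff (by omega)).1 (left_ne_zero_of_mul (left_ne_zero_of_mul_eq_one hcurve))
    have hw : w₀ = p / q := by
      rw [mul_eq_zero, mul_eq_zero, sub_eq_zero] at hcrit
      rcases hcrit with (h | h) | h
      · exact absurd h (pow_ne_zero _ hw₁)
      · exact absurd h (pow_ne_zero _ hw₀)
      · rw [eq_div_iff hq, mul_comm, h]
    subst hw
    exact ⟨rfl, (curve_at_div_iff hpq.le hq ξ).1 hcurve⟩
  · rintro ⟨rfl, hξ⟩
    refine ⟨(curve_at_div_iff hpq.le hq ξ).2 hξ, ?_⟩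
    rw [mul_div_cancel₀ _ hq, sub_self, mul_zero]

/-- Characterization of the movable branch points of the curve
(w-1)^(q-p) w^p ξ^q = 1: w₀ is a repeated root of the polynomial in w iff
w₀ = p/q and ξ^q p^p (q-p)^(q-p) = (-1)^(q-p) q^q. -/
theorem movable_branch_points (p q : ℕ) (hp : 0 < p) (hpq : p < q)
    (ξ w₀ : ℂ) (hξ : ξ ≠ 0) :
    ((w₀ - 1) ^ (q - p) * w₀ ^ p * ξ ^ q = 1 ∧
      ((q : ℂ) - (p : ℂ)) * (w₀ - 1) ^ (q - p - 1) * w₀ ^ p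
        + (p : ℂ) * (w₀ - 1) ^ (q - p) * w₀ ^ (p - 1) = 0)
    ↔ (w₀ = (p : ℂ) / (q : ℂ) ∧
      ξ ^ q * (p : ℂ) ^ p * ((q : ℂ) - (p : ℂ)) ^ (q - p)
        = (-1) ^ (q - p) * (q : ℂ) ^ q) :=
  movable_branch_points_general p q hp hpq ξ w₀
end

section
/- Let p, q be coprime integers with 0 < p < q. Then for every k with 0 ≤ k ≤ k̄, the Ferrer-diagram column lengths satisfy the conservation law T1_k · p_k + T2_k · (q_k − p_k) = q (the total number of boxes in each k-level Ferrer diagram equals q). -/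
/-- Ferrer-diagram column lengths: T1_0 = T2_0 = 1,
T1_{k+1} = T1_k + a_k T2_k, T2_{k+1} = T1_k + (a_k - 1) T2_k. -/
def Tpair (q p : ℕ) : ℕ → ℤ × ℤ
  | 0 => (1, 1)
  | k + 1 => ((Tpair q p k).1 + (aSeq q p k : ℤ) * (Tpair q p k).2,
      (Tpair q p k).1 + ((aSeq q p k : ℤ) - 1) * (Tpair q p k).2)

/-- The conservation law for the boxes of the k-level Ferrer diagram:
T1_k p_k + T2_k (q_k - p_k) = q for every 0 ≤ k ≤ k̄. -/
theorem ferrer_box_conservation (p q : ℕ) (hcop : Nat.Coprime p q) (hp : 0 < p)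
    (hpq : p < q)
    (kbar : ℕ) (hkbar : IsLeast {k : ℕ | (qpSeq q p k).1 = 1} kbar) :
    ∀ k : ℕ, k ≤ kbar →
      (Tpair q p k).1 * ((qpSeq q p k).2 : ℤ)
        + (Tpair q p k).2 * (((qpSeq q p k).1 : ℤ) - ((qpSeq q p k).2 : ℤ))
      = (q : ℤ) := by
  intro k hk
  clear hk
  induction k with
  | zero =>
    simp only [qpSeq, Tpair]
    have : ((q - p : ℕ) : ℤ) = (q : ℤ) - p := by
      omega
    rw [this]; ring
  | succ n ih =>
    simp only [qpSeq, Tpair, aSeq]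
    have h' : ((qpSeq q p n).2 : ℤ) * ((qpSeq q p n).1 / (qpSeq q p n).2 : ℕ)
        + ((qpSeq q p n).1 % (qpSeq q p n).2 : ℕ) = (qpSeq q p n).1 := by
      exact_mod_cast Nat.div_add_mod (qpSeq q p n).1 (qpSeq q p n).2
    linear_combination ih + (Tpair q p n).2 * h'
end

section
/- Let φ = (1+√5)/2 and let F_n denote the Fibonacci numbers (F_0 = 0, F_1 = 1, F_{n+2} = F_{n+1} + F_n). Let ν be a real with 0 < ν < 1 and set k = ⌊log(1/(1−ν))/log φ⌋. Then for every T ∈ {F_{k+1}, F_{k+2}, F_{k+3}} (these are the three possible periods P_{k−1}, P_k, P_{k+1} for the parameter μ = 2/(3+√5)): ν(2−ν)/(√5·(1−ν)) ≤ T < (7 + √5 + (√5 − 3)·ν·(2−ν))/(2√5·(1−ν)). In particular the period diverges proportionally to (1−ν)^(−1) as ν → 1. -/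
/-- Bounds for the period in the golden-ratio case μ = 2/(3+√5): for ν ∈ (0,1)
and k = ⌊log(1/(1-ν))/log φ⌋, each of the three possible periods
F_{k+1}, F_{k+2}, F_{k+3} satisfies
ν(2-ν)/(√5 (1-ν)) ≤ T < (7 + √5 + (√5-3) ν(2-ν))/(2√5 (1-ν)).
In particular the period diverges proportionally to (1-ν)⁻¹ as ν → 1. -/
theorem golden_period_bounds (φ : ℝ) (hφ : φ = (1 + Real.sqrt 5) / 2)
    (ν : ℝ) (h0 : 0 < ν) (h1 : ν < 1) (k : ℕ)
    (hk : (k : ℤ) = ⌊Real.log (1 / (1 - ν)) / Real.log φ⌋) :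
    ∀ T : ℕ, (T = Nat.fib (k + 1) ∨ T = Nat.fib (k + 2) ∨ T = Nat.fib (k + 3)) →
      ν * (2 - ν) / (Real.sqrt 5 * (1 - ν)) ≤ (T : ℝ) ∧
      (T : ℝ) < (7 + Real.sqrt 5 + (Real.sqrt 5 - 3) * ν * (2 - ν))
        / (2 * Real.sqrt 5 * (1 - ν)) := by
  intro T hT
  have hs2 : Real.sqrt 5 ^ 2 = 5 := Real.sq_sqrt (by norm_num)
  have hsnn : (0:ℝ) ≤ Real.sqrt 5 := Real.sqrt_nonneg 5
  have hs1 : 2 < Real.sqrt 5 := by nlinarith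
  have hs3 : Real.sqrt 5 < 3 := by nlinarith
  have hφ1 : 1 < φ := by rw [hφ]; linarith
  have hφ0 : 0 < φ := by linarith
  have hφ2 : φ ^ 2 = φ + 1 := by rw [hφ]; linear_combination (1/4 : ℝ) * hs2
  have hu : 0 < 1 - ν := by linarith
  have hxpos : (0:ℝ) < 1 / (1 - ν) := by positivity
  have hlog : 0 < Real.log φ := Real.log_pos hφ1
  have hL1 : (k:ℝ) ≤ Real.log (1 / (1 - ν)) / Real.log φ := by
    have h := Int.floor_le (Real.log (1 / (1 - ν)) / Real.log φ)
    rw [← hk] at h; exact_mod_cast h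
  have hL2 : Real.log (1 / (1 - ν)) / Real.log φ < (k:ℝ) + 1 := by
    have h := Int.lt_floor_add_one (Real.log (1 / (1 - ν)) / Real.log φ)
    rw [← hk] at h; exact_mod_cast h
  have hA : φ ^ k ≤ 1 / (1 - ν) := by
    have h1' : Real.log (φ ^ k) ≤ Real.log (1 / (1 - ν)) := by
      rw [Real.log_pow]; exact (le_div_iff₀ hlog).mp hL1
    exact (Real.log_le_log_iff (by positivity) hxpos).mp h1'
  have hB : 1 / (1 - ν) < φ ^ (k + 1) := by
    have h2' : Real.log (1 / (1 - ν)) < Real.log (φ ^ (k + 1)) := by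
      rw [Real.log_pow]; push_cast
      calc Real.log (1 / (1 - ν)) < ((k:ℝ) + 1) * Real.log φ := (div_lt_iff₀ hlog).mp hL2
        _ = _ := by ring
    exact (Real.log_lt_log_iff hxpos (by positivity)).mp h2'
  -- Binet
  have binet : ∀ n : ℕ, (Nat.fib n : ℝ)
      = (φ ^ n - ((1 - Real.sqrt 5) / 2) ^ n) / Real.sqrt 5 := by
    intro n; rw [hφ]; exact Real.coe_fib_eq n
  have hψabs : ∀ n : ℕ, |((1 - Real.sqrt 5) / 2) ^ n| * φ ^ n = 1 := by
    intro n
    rw [abs_pow, ← mul_pow]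
    have h : |(1 - Real.sqrt 5) / 2| * φ = 1 := by
      rw [abs_of_nonpos (by nlinarith), hφ]
      linear_combination (1/4 : ℝ) * hs2
    rw [h, one_pow]
  have hψle : ∀ n : ℕ, ((1 - Real.sqrt 5) / 2) ^ n ≤ (φ ^ n)⁻¹ := by
    intro n
    have hp : (0:ℝ) < φ ^ n := pow_pos hφ0 n
    have h := hψabs n
    have habs : |((1 - Real.sqrt 5) / 2) ^ n| = (φ ^ n)⁻¹ := by
      field_simp at h ⊢; linarith
    calc ((1 - Real.sqrt 5) / 2) ^ n ≤ |((1 - Real.sqrt 5) / 2) ^ n| := le_abs_self _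
      _ = (φ ^ n)⁻¹ := habs
  have hψge : ∀ n : ℕ, -(φ ^ n)⁻¹ ≤ ((1 - Real.sqrt 5) / 2) ^ n := by
    intro n
    have hp : (0:ℝ) < φ ^ n := pow_pos hφ0 n
    have h := hψabs n
    have habs : |((1 - Real.sqrt 5) / 2) ^ n| = (φ ^ n)⁻¹ := by
      field_simp at h ⊢; linarith
    have := neg_abs_le (((1 - Real.sqrt 5) / 2) ^ n)
    rw [habs] at this; exact this
  have hinv : (1 - ν) * (1 / (1 - ν)) = 1 := by field_simp
  have hk1pos : (0:ℝ) < φ ^ (k + 1) := pow_pos hφ0 _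
  have hk3pos : (0:ℝ) < φ ^ (k + 3) := pow_pos hφ0 _
  -- inverse of φ^(k+1) is below 1 - ν
  have hBinv : (φ ^ (k + 1))⁻¹ < 1 - ν := by
    have h := inv_strictAnti₀ hxpos hB
    rwa [one_div, inv_inv] at h
  have hφ3 : φ ^ 3 = 2 + Real.sqrt 5 := by
    rw [hφ]; linear_combination ((Real.sqrt 5 + 3) / 8) * hs2
  have hφi2 : φ ^ 2 * ((3 - Real.sqrt 5) / 2) = 1 := by
    rw [hφ2, hφ]; linear_combination (-(1:ℝ)/4) * hs2
  -- lower bound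
  have hTge : (Nat.fib (k + 1) : ℝ) ≤ (T : ℝ) := by
    rcases hT with h | h | h <;> rw [h] <;> exact_mod_cast Nat.fib_mono (by omega)
  have hTle : (T : ℝ) ≤ (Nat.fib (k + 3) : ℝ) := by
    rcases hT with h | h | h <;> rw [h] <;> exact_mod_cast Nat.fib_mono (by omega)
  have hlow : 1 / (1 - ν) - (1 - ν) ≤ Real.sqrt 5 * (Nat.fib (k + 1) : ℝ) := by
    rw [binet (k + 1)]
    have h1 := hψle (k + 1)
    have : Real.sqrt 5 * ((φ ^ (k+1) - ((1 - Real.sqrt 5) / 2) ^ (k+1)) / Real.sqrt 5)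
        = φ ^ (k+1) - ((1 - Real.sqrt 5) / 2) ^ (k+1) := by
      field_simp
    rw [this]
    have hBinv' : (φ ^ (k + 1))⁻¹ < 1 - ν := hBinv
    linarith [hB, h1]
  have hhigh : Real.sqrt 5 * (Nat.fib (k + 3) : ℝ)
      < (2 + Real.sqrt 5) * (1 / (1 - ν)) + (1 - ν) * ((3 - Real.sqrt 5) / 2) := by
    rw [binet (k + 3)]
    have h1 := hψge (k + 3)
    have heq : Real.sqrt 5 * ((φ ^ (k+3) - ((1 - Real.sqrt 5) / 2) ^ (k+3)) / Real.sqrt 5)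
        = φ ^ (k+3) - ((1 - Real.sqrt 5) / 2) ^ (k+3) := by
      field_simp
    rw [heq]
    have hD : φ ^ (k + 3) ≤ (2 + Real.sqrt 5) * (1 / (1 - ν)) := by
      have : φ ^ (k + 3) = φ ^ k * φ ^ 3 := by rw [← pow_add]
      rw [this, hφ3]
      have := mul_le_mul_of_nonneg_right hA (by linarith : (0:ℝ) ≤ 2 + Real.sqrt 5)
      linarith [this]
    have hC : (φ ^ (k + 3))⁻¹ < (1 - ν) * ((3 - Real.sqrt 5) / 2) := by
      have hsplit : (φ ^ (k + 3))⁻¹ = (φ ^ (k + 1))⁻¹ * (φ ^ 2)⁻¹ := by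
        rw [← mul_inv, ← pow_add]
      have h2pos : (0:ℝ) < φ ^ 2 := pow_pos hφ0 2
      have hval : (φ ^ 2)⁻¹ = (3 - Real.sqrt 5) / 2 := by
        field_simp at hφi2 ⊢; linarith
      rw [hsplit, hval]
      have hq : (0:ℝ) < (3 - Real.sqrt 5) / 2 := by linarith
      calc (φ ^ (k + 1))⁻¹ * ((3 - Real.sqrt 5) / 2)
          < (1 - ν) * ((3 - Real.sqrt 5) / 2) :=
            mul_lt_mul_of_pos_right hBinv hq
        _ = _ := by ring
    linarith [h1, hD, hC]
  constructor
  · rw [div_le_iff₀ (by positivity : (0:ℝ) < Real.sqrt 5 * (1 - ν))]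
    have h1 : (1 - ν) * (1 / (1 - ν) - (1 - ν))
        ≤ (1 - ν) * (Real.sqrt 5 * (Nat.fib (k + 1) : ℝ)) :=
      mul_le_mul_of_nonneg_left hlow (le_of_lt hu)
    have h3 : ((1 - ν) * Real.sqrt 5) * (Nat.fib (k + 1) : ℝ)
        ≤ ((1 - ν) * Real.sqrt 5) * (T : ℝ) :=
      mul_le_mul_of_nonneg_left hTge (by positivity)
    nlinarith [h1, h3, hinv]
  · rw [lt_div_iff₀ (by positivity : (0:ℝ) < 2 * Real.sqrt 5 * (1 - ν))]
    have h1 : (1 - ν) * (Real.sqrt 5 * (Nat.fib (k + 3) : ℝ))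
        < (1 - ν) * ((2 + Real.sqrt 5) * (1 / (1 - ν)) + (1 - ν) * ((3 - Real.sqrt 5) / 2)) :=
      mul_lt_mul_of_pos_left hhigh hu
    have h3 : ((1 - ν) * Real.sqrt 5) * (T : ℝ)
        ≤ ((1 - ν) * Real.sqrt 5) * (Nat.fib (k + 3) : ℝ) :=
      mul_le_mul_of_nonneg_left hTle (by positivity)
    have h2 : (1 - ν) * ((2 + Real.sqrt 5) * (1 / (1 - ν))) = 2 + Real.sqrt 5 := by
      field_simp
    rw [mul_add, h2] at h1
    linarith [h1, h3]
end
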